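/- arXiv:math/0309155 — 5 statements merged into one kernel-verified Lean document; each statement's English description precedes it below -/
import Mathlib

section
/- The ℤ-module ∏_{n ∈ ℕ} ℤ (the countable direct product of copies of ℤ) is not a projective ℤ-module. -/
/-!
A projective module `M` carries a section `s : M → (M →₀ ℤ)` of `Finsupp.linearCombination`, so
each `x` lies in the span of the finite set `(s x).support`. Let `B` be the countable union of the
supports of `s eₙ` over the unit vectors `eₙ` of `ℤ^ℕ`. For `p ∉ B` the coordinate functional
`x ↦ s x p` kills every `eₙ`, and a functional on `ℤ^ℕ` killing the `eₙ` kills every sequence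
tending `2`-adically to `0`: modulo a finitely supported sequence, such a sequence is divisible by
any given `2^k`, so its value is divisible by every `2^k`. Hence all these sequences lie in the span
of `B`, which is countable, whereas the sequences `(2ⁿ yₙ)ₙ` alone are uncountably many.
-/

open Filter Submodule

theorem Int.eq_zero_of_forall_pow_dvd {m a : ℤ} (hm : m.natAbs ≠ 1) (h : ∀ k : ℕ, m ^ k ∣ a) :
    a = 0 := by
  by_contra ha
  obtain ⟨k, hk⟩ := Int.finiteMultiplicity_iff.mpr ⟨hm, ha⟩
  exact hk (h _)

theorem Set.Countable.submoduleSpan {R M : Type*} [Semiring R] [Countable R] [AddCommMonoid M]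
    [Module R M] {B : Set M} (hB : B.Countable) : (span R B : Set M).Countable := by
  have := hB.to_subtype
  rw [← Subtype.range_coe (s := B)]
  exact Set.countable_coe_iff.mp (inferInstanceAs (Countable (span R (Set.range ((↑) : B → M)))))

theorem Finsupp.mem_span_support_of_leftInverse {R M : Type*} [Semiring R] [AddCommMonoid M]
    [Module R M] {s : M →ₗ[R] M →₀ R} (hs : Function.LeftInverse (linearCombination R id) s)
    (x : M) : x ∈ span R ((s x).support : Set M) := by
  rw [← Set.image_id ((s x).support : Set M), Finsupp.mem_span_image_iff_linearCombination]
  exact ⟨s x, Finsupp.mem_supported_support R (s x), hs x⟩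

theorem LinearMap.map_eq_zero_of_eventually_eq_zero {ι R M : Type*} [Semiring R] [AddCommMonoid M]
    [Module R M] [DecidableEq ι] (f : (ι → R) →ₗ[R] M) (hf : ∀ i, f (Pi.single i 1) = 0)
    {t : ι → R} (ht : ∀ᶠ i in cofinite, t i = 0) : f t = 0 := by
  have ht_fin : {i | t i ≠ 0}.Finite := ht
  have ht_sum : t = ∑ i ∈ ht_fin.toFinset, t i • Pi.single i 1 := by
    ext i
    by_cases hi : t i = 0 <;> simp [Finset.sum_apply, Pi.single_apply, hi]
  rw [ht_sum]
  simp [hf]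

theorem Int.linearMap_eq_zero_of_forall_eventually_pow_dvd {ι : Type*} [DecidableEq ι]
    (f : (ι → ℤ) →ₗ[ℤ] ℤ) (hf : ∀ i, f (Pi.single i 1) = 0) {m : ℤ} (hm : m.natAbs ≠ 1)
    {x : ι → ℤ} (hx : ∀ k : ℕ, ∀ᶠ i in cofinite, m ^ k ∣ x i) : f x = 0 := by
  refine Int.eq_zero_of_forall_pow_dvd hm fun k => ?_
  have hx_eq : x = (fun i => x i % m ^ k) + m ^ k • fun i => x i / m ^ k := by
    ext i
    simp [Int.emod_add_mul_ediv]
  have hrem : f (fun i => x i % m ^ k) = 0 :=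
    f.map_eq_zero_of_eventually_eq_zero hf <| (hx k).mono fun i => Int.emod_eq_zero_of_dvd
  rw [hx_eq, map_add, map_smul, hrem, zero_add, smul_eq_mul]
  exact dvd_mul_right _ _

theorem Int.not_countable_setOf_forall_eventually_pow_dvd {m : ℤ} (hm : m ≠ 0) :
    ¬ {x : ℕ → ℤ | ∀ k : ℕ, ∀ᶠ n in cofinite, m ^ k ∣ x n}.Countable := by
  have : Uncountable (ℕ → ℤ) := by
    rw [← Cardinal.aleph0_lt_mk_iff]
    simpa using Cardinal.aleph0_lt_continuum
  set scale : (ℕ → ℤ) → ℕ → ℤ := fun y n => m ^ n * y n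
  have hmaps : Set.MapsTo scale Set.univ {x | ∀ k : ℕ, ∀ᶠ n in cofinite, m ^ k ∣ x n} :=
    fun y _ k => by
      rw [Nat.cofinite_eq_atTop]
      exact (eventually_ge_atTop k).mono fun n hn => (pow_dvd_pow m hn).mul_right _
  have hinj : Set.InjOn scale Set.univ := fun y _ z _ hyz =>
    funext fun n => mul_left_cancel₀ (pow_ne_zero n hm) (congrFun hyz n)
  exact fun hA => Set.not_countable_univ (hmaps.countable_of_injOn hinj hA)

/-- Baer: the countable direct product of copies of `ℤ` is not a projective
`ℤ`-module. -/
theorem not_projective_pi_int : ¬ Module.Projective ℤ (ℕ → ℤ) := by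
  rintro ⟨s, hs⟩
  classical
  set B := ⋃ n, ((s (Pi.single n 1)).support : Set (ℕ → ℤ))
  have hB : B.Countable := Set.countable_iUnion fun n => (s _).support.countable_toSet
  set A := {x : ℕ → ℤ | ∀ k : ℕ, ∀ᶠ n in cofinite, (2 : ℤ) ^ k ∣ x n}
  have hAB : A ⊆ span ℤ B := fun x hx => by
    refine span_mono (fun p hp => by_contra fun hpB => ?_)
      (Finsupp.mem_span_support_of_leftInverse hs x)
    have hcoord : ∀ n, (Finsupp.lapply p ∘ₗ s) (Pi.single n 1) = 0 := fun n =>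
      Finsupp.notMem_support_iff.mp fun h => hpB (Set.mem_iUnion_of_mem n h)
    exact Finsupp.mem_support_iff.mp hp
      (Int.linearMap_eq_zero_of_forall_eventually_pow_dvd _ hcoord (by decide) hx)
  exact Int.not_countable_setOf_forall_eventually_pow_dvd two_ne_zero (hB.submoduleSpan.mono hAB)
end

section
/- Every flat module over a ring is a filtered colimit of finitely generated free modules. -/
/-!
Lazard's index category has as objects the linear maps `π : Rⁿ → M` and as morphisms the linear
maps `Rⁿ → Rᵐ` over `M`; the diagram sends `π` to `Rⁿ`, with the tautological cocone to `M`.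
Direct sums give cocones on pairs of objects, and the equational criterion for flatness does the
rest: if `π ∘ f = 0` for a map `f` out of a finite module, then `π` factors through some `Rᵏ` by a
map killing `f`. For `f = g₁ - g₂` this coequalizes parallel morphisms; for `f = (r ↦ r • x)` with
`π x = 0` it shows that `x` already dies in the diagram. Together with surjectivity (take `n = 1`)
this makes the cocone a filtered colimit on underlying sets, hence of modules: the forgetful
functor preserves filtered colimits and reflects isomorphisms.
-/

open CategoryTheory CategoryTheory.Limits Finsupp

universe u

structure FinFreeOver (R M : Type u) [CommRing R] [AddCommGroup M] [Module R M] where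
  n : ℕ
  π : (Fin n →₀ R) →ₗ[R] M

noncomputable section

namespace FinFreeOver

variable {R M : Type u} [CommRing R] [AddCommGroup M] [Module R M]

instance : Category (FinFreeOver R M) where
  Hom j k := { g : (Fin j.n →₀ R) →ₗ[R] (Fin k.n →₀ R) // k.π ∘ₗ g = j.π }
  id j := ⟨LinearMap.id, LinearMap.comp_id _⟩
  comp f g := ⟨g.1 ∘ₗ f.1, by rw [← LinearMap.comp_assoc, g.2, f.2]⟩

lemma comp_val {j k l : FinFreeOver R M} (f : j ⟶ k) (g : k ⟶ l) :
    (f ≫ g).1 = g.1 ∘ₗ f.1 := rfl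

def sum (j k : FinFreeOver R M) : FinFreeOver R M :=
  ⟨j.n + k.n,
    linearCombination R (Fin.append (fun i => j.π (single i 1)) (fun i => k.π (single i 1)))⟩

def inl (j k : FinFreeOver R M) : j ⟶ j.sum k :=
  ⟨lmapDomain R R (Fin.castAdd k.n), by ext; simp [sum, Fin.append_left]⟩

def inr (j k : FinFreeOver R M) : k ⟶ j.sum k :=
  ⟨lmapDomain R R (Fin.natAdd j.n), by ext; simp [sum, Fin.append_right]⟩

instance : Nonempty (FinFreeOver R M) := ⟨⟨0, 0⟩⟩

lemma exists_hom_comp_eq_zero [Module.Flat R M] (j : FinFreeOver R M) {K : Type*}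
    [AddCommGroup K] [Module R K] [Module.Finite R K] {f : K →ₗ[R] Fin j.n →₀ R}
    (hf : j.π ∘ₗ f = 0) : ∃ (k : FinFreeOver R M) (g : j ⟶ k), g.1 ∘ₗ f = 0 :=
  have ⟨n, a, y, hπ, ha⟩ := Module.Flat.exists_factorization_of_comp_eq_zero_of_free hf
  ⟨⟨n, y⟩, ⟨a, hπ.symm⟩, ha⟩

lemma exists_hom_apply_eq_apply [Module.Flat R M] (j : FinFreeOver R M) {x y : Fin j.n →₀ R}
    (h : j.π x = j.π y) : ∃ (k : FinFreeOver R M) (g : j ⟶ k), g.1 x = g.1 y := by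
  obtain ⟨k, g, hg⟩ := j.exists_hom_comp_eq_zero (f := LinearMap.toSpanSingleton R _ (x - y))
    (by ext; simp [h])
  exact ⟨k, g, sub_eq_zero.mp (by simpa using LinearMap.congr_fun hg 1)⟩

lemma exists_hom_comp_eq_comp [Module.Flat R M] {j k : FinFreeOver R M} (f g : j ⟶ k) :
    ∃ (l : FinFreeOver R M) (h : k ⟶ l), f ≫ h = g ≫ h := by
  have hfg : k.π ∘ₗ (f.1 - g.1) = 0 := by rw [LinearMap.comp_sub, f.2, g.2, sub_self]
  obtain ⟨l, h, hh⟩ := k.exists_hom_comp_eq_zero hfg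
  exact ⟨l, h, Subtype.ext (by rw [comp_val, comp_val, ← sub_eq_zero, ← LinearMap.comp_sub, hh])⟩

instance [Module.Flat R M] : IsFiltered (FinFreeOver R M) where
  cocone_objs j k := ⟨j.sum k, j.inl k, j.inr k, trivial⟩
  cocone_maps _ _ := exists_hom_comp_eq_comp

variable (R M) in
def diagram : FinFreeOver R M ⥤ ModuleCat.{u} R where
  obj j := ModuleCat.of R (Fin j.n →₀ R)
  map f := ModuleCat.ofHom f.1

instance (j : FinFreeOver R M) : Module.Free R ((diagram R M).obj j) :=
  inferInstanceAs (Module.Free R (Fin j.n →₀ R))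

instance (j : FinFreeOver R M) : Module.Finite R ((diagram R M).obj j) :=
  inferInstanceAs (Module.Finite R (Fin j.n →₀ R))

variable (R M) in
def cocone : Cocone (diagram R M) where
  pt := ModuleCat.of R M
  ι.app j := ModuleCat.ofHom j.π
  ι.naturality _ _ f := ModuleCat.hom_ext (f.2.trans (LinearMap.id_comp _).symm)

def isColimitCocone [Module.Flat R M] : IsColimit (cocone R M) := by
  have : ReflectsColimitsOfShape (FinFreeOver R M) (forget (ModuleCat.{u} R)) :=
    reflectsColimitsOfShape_of_reflectsIsomorphisms
  refine isColimitOfReflects (forget _) <| Types.FilteredColimit.isColimitOf' _ _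
    (fun m => ?_) (fun j x y h => ?_)
  · change M at m
    exact ⟨⟨1, linearCombination R fun _ => m⟩, single 0 1,
      (by simp : linearCombination R (fun _ : Fin 1 => m) (single 0 1) = m).symm⟩
  · exact j.exists_hom_apply_eq_apply h

end FinFreeOver
end

/-- Govorov–Lazard: every flat module is a filtered colimit of finitely
generated free modules. -/
theorem flat_is_filtered_colimit_of_fg_free
    (R : Type) [CommRing R] (M : Type) [AddCommGroup M] [Module R M]
    (h : Module.Flat R M) :
    ∃ (J : Type) (_ : SmallCategory J) (_ : IsFiltered J) (F : J ⥤ ModuleCat.{0} R),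
      (∀ j : J, Module.Free R (F.obj j) ∧ Module.Finite R (F.obj j)) ∧
      Nonempty (colimit F ≅ ModuleCat.of R M) :=
  have := h
  ⟨FinFreeOver R M, inferInstance, inferInstance, FinFreeOver.diagram R M,
    fun _ => ⟨inferInstance, inferInstance⟩,
    ⟨colimit.isoColimitCocone ⟨_, FinFreeOver.isColimitCocone⟩⟩⟩
end

section
/- Let V be a vector space over a field k and let L₀ be a fixed subspace. Then there exists a function d from the set of subspaces commensurable with L₀ to ℤ such that d(L') − d(L) = dim(L'/(L ∩ L')) − dim(L/(L ∩ L')) for all L, L' commensurable with L₀; moreover any two such functions differ by a constant integer. -/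
variable {k V : Type*} [Field k] [AddCommGroup V] [Module k V]

/-- Two subspaces are commensurable if their intersection has finite
codimension in each of them. -/
def Commensurable' (A B : Submodule k V) : Prop :=
  FiniteDimensional k (↥A ⧸ Submodule.comap A.subtype (A ⊓ B)) ∧
  FiniteDimensional k (↥B ⧸ Submodule.comap B.subtype (A ⊓ B))

/-- The relative dimension `d(A,B) = dim(B/(A∩B)) − dim(A/(A∩B)) ∈ ℤ`. -/
noncomputable def relDim (A B : Submodule k V) : ℤ :=
  (Module.finrank k (↥B ⧸ Submodule.comap B.subtype (A ⊓ B)) : ℤ) -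
  (Module.finrank k (↥A ⧸ Submodule.comap A.subtype (A ⊓ B)) : ℤ)

/-! Write `X/Y` for `X/(X ∩ Y)`, encoded as `↥X ⧸ Y.comap X.subtype`. Everything rests on the
tower formula `dim X/(Y ∩ Z) = dim X/Y + dim (X ∩ Y)/Z` and on the monotonicity of `dim X/Y` in `X`,
which holds because `X/Y` is the image of `X` in `V/Y`. These make commensurability transitive and
let both terms of `relDim A B`, for pairwise commensurable `A, B, C`, be measured relative to
`A ∩ B ∩ C`; hence `relDim A B + relDim B C = relDim A C`, and `L ↦ relDim L₀ L` is a dimension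
theory. -/

open Module

namespace Submodule

variable {K : Type*} [DivisionRing K] [Module K V]

theorem comap_subtype_inf_left (A B : Submodule K V) :
    (A ⊓ B).comap A.subtype = B.comap A.subtype := by
  rw [comap_inf, comap_subtype_self, top_inf_eq]

theorem comap_subtype_inf_right (A B : Submodule K V) :
    (A ⊓ B).comap B.subtype = A.comap B.subtype := by
  rw [comap_inf, comap_subtype_self, inf_top_eq]

theorem rank_quotient_comap_subtype_add (X Y Z : Submodule K V) :
    Module.rank K (↥X ⧸ Y.comap X.subtype) +
        Module.rank K (↥(X ⊓ Y) ⧸ Z.comap (X ⊓ Y).subtype) =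
      Module.rank K (↥X ⧸ (Y ⊓ Z).comap X.subtype) := by
  set N := (Y ⊓ Z).comap X.subtype
  set P := Y.comap X.subtype
  -- `X/(Y ∩ Z)` modulo its subspace `P/N`, the image of `X ∩ Y`, is `X/Y`; and `P/N ≅ (X ∩ Y)/Z`.
  let f := N.mkQ ∘ₗ inclusion (inf_le_left : X ⊓ Y ≤ X)
  have hker : LinearMap.ker f = Z.comap (X ⊓ Y).subtype := by
    rw [LinearMap.ker_comp, ker_mkQ, ← comap_comp, subtype_comp_inclusion]
    ext ⟨x, -, hxY⟩
    simpa using fun _ => hxY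
  have hrange : LinearMap.range f = P.map N.mkQ := by
    rw [LinearMap.range_comp, range_inclusion, comap_subtype_inf_left]
  rw [← rank_quotient_add_rank (P.map N.mkQ),
    (quotientQuotientEquivQuotient N P (comap_mono inf_le_left)).rank_eq,
    ← hrange, ← hker, f.quotKerEquivRange.rank_eq]

theorem rank_quotient_comap_subtype_anti (X : Submodule K V) {Y Y' : Submodule K V}
    (h : Y' ≤ Y) :
    Module.rank K (↥X ⧸ Y.comap X.subtype) ≤ Module.rank K (↥X ⧸ Y'.comap X.subtype) := by
  rw [← inf_eq_right.mpr h, ← rank_quotient_comap_subtype_add X Y Y']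
  exact self_le_add_right _ _

noncomputable def quotientComapSubtypeEquivMapMkQ (X Y : Submodule K V) :
    (↥X ⧸ Y.comap X.subtype) ≃ₗ[K] X.map Y.mkQ :=
  let f := Y.mkQ ∘ₗ X.subtype
  have hker : LinearMap.ker f = Y.comap X.subtype := by
    rw [LinearMap.ker_comp, ker_mkQ]
  have hrange : LinearMap.range f = X.map Y.mkQ := by
    rw [LinearMap.range_comp, range_subtype]
  (quotEquivOfEq _ _ hker.symm).trans (f.quotKerEquivRange.trans (LinearEquiv.ofEq _ _ hrange))

theorem rank_quotient_comap_subtype_mono {X X' : Submodule K V} (h : X ≤ X')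
    (Y : Submodule K V) :
    Module.rank K (↥X ⧸ Y.comap X.subtype) ≤ Module.rank K (↥X' ⧸ Y.comap X'.subtype) := by
  rw [(quotientComapSubtypeEquivMapMkQ X Y).rank_eq, (quotientComapSubtypeEquivMapMkQ X' Y).rank_eq]
  exact rank_mono (map_mono h)

theorem finiteDimensional_quotient_comap_subtype_inf {X Y Z : Submodule K V}
    (hY : FiniteDimensional K (↥X ⧸ Y.comap X.subtype))
    (hZ : FiniteDimensional K (↥X ⧸ Z.comap X.subtype)) :
    FiniteDimensional K (↥X ⧸ (Y ⊓ Z).comap X.subtype) := by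
  rw [FiniteDimensional, ← rank_lt_aleph0_iff, ← rank_quotient_comap_subtype_add]
  exact Cardinal.add_lt_aleph0 (rank_lt_aleph0_iff.mpr hY)
    ((rank_quotient_comap_subtype_mono inf_le_left Z).trans_lt (rank_lt_aleph0_iff.mpr hZ))

theorem finiteDimensional_quotient_comap_subtype_trans {X Y Z : Submodule K V}
    (hXY : FiniteDimensional K (↥X ⧸ Y.comap X.subtype))
    (hYZ : FiniteDimensional K (↥Y ⧸ Z.comap Y.subtype)) :
    FiniteDimensional K (↥X ⧸ Z.comap X.subtype) := by
  rw [FiniteDimensional, ← rank_lt_aleph0_iff]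
  refine (rank_quotient_comap_subtype_anti X (inf_le_right : Y ⊓ Z ≤ Z)).trans_lt ?_
  rw [← rank_quotient_comap_subtype_add]
  exact Cardinal.add_lt_aleph0 (rank_lt_aleph0_iff.mpr hXY)
    ((rank_quotient_comap_subtype_mono inf_le_right Z).trans_lt (rank_lt_aleph0_iff.mpr hYZ))

theorem finrank_quotient_comap_subtype_add {X Y Z : Submodule K V}
    (h : FiniteDimensional K (↥X ⧸ (Y ⊓ Z).comap X.subtype)) :
    finrank K (↥X ⧸ Y.comap X.subtype) + finrank K (↥(X ⊓ Y) ⧸ Z.comap (X ⊓ Y).subtype) =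
      finrank K (↥X ⧸ (Y ⊓ Z).comap X.subtype) := by
  have hsum := rank_quotient_comap_subtype_add X Y Z
  obtain ⟨hY, hZ⟩ := Cardinal.add_lt_aleph0_iff.mp (hsum ▸ rank_lt_aleph0_iff.mpr h)
  simp only [finrank, ← hsum, Cardinal.toNat_add hY hZ]

end Submodule

open Submodule

theorem commensurable'_iff {A B : Submodule k V} :
    Commensurable' A B ↔ FiniteDimensional k (↥A ⧸ B.comap A.subtype) ∧
      FiniteDimensional k (↥B ⧸ A.comap B.subtype) := by
  rw [Commensurable', comap_subtype_inf_left, comap_subtype_inf_right]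

theorem commensurable'_refl (A : Submodule k V) : Commensurable' A A := by
  rw [commensurable'_iff, comap_subtype_self]
  exact ⟨inferInstance, inferInstance⟩

theorem Commensurable'.symm {A B : Submodule k V} (h : Commensurable' A B) :
    Commensurable' B A :=
  commensurable'_iff.mpr (commensurable'_iff.mp h).symm

theorem Commensurable'.trans {A B C : Submodule k V} (hAB : Commensurable' A B)
    (hBC : Commensurable' B C) : Commensurable' A C := by
  rw [commensurable'_iff] at *
  exact ⟨finiteDimensional_quotient_comap_subtype_trans hAB.1 hBC.1,
    finiteDimensional_quotient_comap_subtype_trans hBC.2 hAB.2⟩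

theorem relDim_eq (A B : Submodule k V) :
    relDim A B =
      (finrank k (↥B ⧸ A.comap B.subtype) : ℤ) - finrank k (↥A ⧸ B.comap A.subtype) := by
  rw [relDim, comap_subtype_inf_left, comap_subtype_inf_right]

theorem relDim_eq_finrank_sub_finrank (A B C : Submodule k V)
    (hA : FiniteDimensional k (↥A ⧸ (B ⊓ C).comap A.subtype))
    (hB : FiniteDimensional k (↥B ⧸ (A ⊓ C).comap B.subtype)) :
    relDim A B = (finrank k (↥B ⧸ (A ⊓ C).comap B.subtype) : ℤ) -
      finrank k (↥A ⧸ (B ⊓ C).comap A.subtype) := by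
  rw [relDim_eq, ← finrank_quotient_comap_subtype_add hA, ← finrank_quotient_comap_subtype_add hB,
    inf_comm B A]
  push_cast
  ring

theorem relDim_add_relDim {A B C : Submodule k V} (hAB : Commensurable' A B)
    (hBC : Commensurable' B C) (hAC : Commensurable' A C) :
    relDim A B + relDim B C = relDim A C := by
  rw [commensurable'_iff] at hAB hBC hAC
  rw [relDim_eq_finrank_sub_finrank A B C
      (finiteDimensional_quotient_comap_subtype_inf hAB.1 hAC.1)
      (finiteDimensional_quotient_comap_subtype_inf hAB.2 hBC.1),
    relDim_eq_finrank_sub_finrank B C A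
      (finiteDimensional_quotient_comap_subtype_inf hBC.1 hAB.2)
      (finiteDimensional_quotient_comap_subtype_inf hBC.2 hAC.2),
    relDim_eq_finrank_sub_finrank A C B
      (finiteDimensional_quotient_comap_subtype_inf hAC.1 hAB.1)
      (finiteDimensional_quotient_comap_subtype_inf hAC.2 hBC.2),
    inf_comm C A, inf_comm B A, inf_comm C B]
  ring

/-- A dimension theory on the commensurability class of a fixed subspace `L₀`
exists, and is unique up to adding a constant integer: dimension theories form
a `ℤ`-torsor. -/
theorem dimension_theory_exists_unique_up_to_constant (L₀ : Submodule k V) :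
    (∃ d : Submodule k V → ℤ,
      ∀ L L' : Submodule k V, Commensurable' L L₀ → Commensurable' L' L₀ →
        d L' - d L = relDim L L') ∧
    (∀ d₁ d₂ : Submodule k V → ℤ,
      (∀ L L' : Submodule k V, Commensurable' L L₀ → Commensurable' L' L₀ →
        d₁ L' - d₁ L = relDim L L') →
      (∀ L L' : Submodule k V, Commensurable' L L₀ → Commensurable' L' L₀ →
        d₂ L' - d₂ L = relDim L L') →
      ∃ c : ℤ, ∀ L : Submodule k V, Commensurable' L L₀ → d₁ L = d₂ L + c) := by
  refine ⟨⟨fun L => relDim L₀ L, fun L L' hL hL' => ?_⟩, fun d₁ d₂ h₁ h₂ => ?_⟩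
  · have hcocycle := relDim_add_relDim hL.symm (hL.trans hL'.symm) hL'.symm
    dsimp only
    omega
  · refine ⟨d₁ L₀ - d₂ L₀, fun L hL => ?_⟩
    have e₁ := h₁ L₀ L (commensurable'_refl L₀) hL
    have e₂ := h₂ L₀ L (commensurable'_refl L₀) hL
    omega
end

section
/- Let R be a ring and M an R-module that is a direct summand of P ⊕ F, where P is projective and F is finitely presented. If L ⊆ M is a finitely generated submodule such that M/L is projective, then L is finitely presented. -/
/-- A witness that `M` is a direct summand of `P' ⊕ F` with `P'` projective
and `F` finitely presented (i.e. `M` is 2-almost projective). -/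
structure TwoAlmostProjectiveWitness (R : Type*) [Ring R]
    (M : Type*) [AddCommGroup M] [Module R M] where
  P' : Type*
  F : Type*
  [addP : AddCommGroup P']
  [modP : Module R P']
  [addF : AddCommGroup F]
  [modF : Module R F]
  projP : Module.Projective R P'
  fpF : Module.FinitePresentation R F
  ι : M →ₗ[R] P' × F
  π : P' × F →ₗ[R] M
  split : π ∘ₗ ι = LinearMap.id

section Aux

variable {R : Type*} [Ring R]

lemma fp_of_linearEquiv {M N : Type*} [AddCommGroup M] [Module R M]
    [AddCommGroup N] [Module R N] (e : M ≃ₗ[R] N) (hM : Module.FinitePresentation R M) :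
    Module.FinitePresentation R N :=
  haveI := hM
  Module.finitePresentation_of_surjective e.toLinearMap e.surjective
    (by rw [LinearMap.ker_eq_bot.mpr e.injective]; exact Submodule.fg_bot)

lemma fp_prod {M N : Type*} [AddCommGroup M] [Module R M] [AddCommGroup N] [Module R N]
    (hM : Module.FinitePresentation R M) (hN : Module.FinitePresentation R N) :
    Module.FinitePresentation R (M × N) := by
  haveI := hN
  have e : M ≃ₗ[R] LinearMap.ker (LinearMap.snd R M N) :=
    (LinearEquiv.ofInjective (LinearMap.inl R M N) LinearMap.inl_injective).trans
      (LinearEquiv.ofEq _ _ (LinearMap.range_inl R M N))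
  haveI : Module.FinitePresentation R (LinearMap.ker (LinearMap.snd R M N)) :=
    fp_of_linearEquiv e hM
  exact Module.finitePresentation_of_ker (LinearMap.snd R M N) (fun n => ⟨(0, n), rfl⟩)

lemma fp_of_retract {N L : Type*} [AddCommGroup N] [Module R N] [AddCommGroup L] [Module R L]
    (hN : Module.FinitePresentation R N) (i : L →ₗ[R] N) (r : N →ₗ[R] L)
    (h : r ∘ₗ i = LinearMap.id) : Module.FinitePresentation R L := by
  haveI := hN
  have hri : ∀ z : L, r (i z) = z := fun z => LinearMap.congr_fun h z
  have hsurj : Function.Surjective r := fun x => ⟨i x, hri x⟩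
  apply Module.finitePresentation_of_surjective r hsurj
  have hk : LinearMap.ker r = LinearMap.range (LinearMap.id - i ∘ₗ r) := by
    ext x
    simp only [LinearMap.mem_ker, LinearMap.mem_range]
    constructor
    · intro hx
      exact ⟨x, by simp [LinearMap.sub_apply, hx]⟩
    · rintro ⟨y, rfl⟩
      simp [LinearMap.sub_apply, hri]
  rw [hk, LinearMap.range_eq_map]
  exact Submodule.FG.map _ Module.Finite.fg_top

end Aux

set_option maxHeartbeats 1600000 in
/-- In a 2-almost projective module, every coprojective lattice (a finitely
generated submodule with projective quotient) is finitely presented. -/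
theorem coprojective_lattice_finitePresentation
    (R : Type*) [Ring R] (M : Type*) [AddCommGroup M] [Module R M]
    (w : TwoAlmostProjectiveWitness R M)
    (L : Submodule R M) (hLfg : L.FG)
    (hquot : Module.Projective R (M ⧸ L)) :
    Module.FinitePresentation R L := by
  classical
  letI := w.addP; letI := w.modP; letI := w.addF; letI := w.modF
  haveI := w.fpF
  haveI := hquot
  -- Step 1: a retraction `r : M →ₗ L`.
  obtain ⟨s, hs⟩ := Module.projective_lifting_property L.mkQ
    (LinearMap.id : (M ⧸ L) →ₗ[R] M ⧸ L) (Submodule.mkQ_surjective L)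
  set r₀ : M →ₗ[R] M := (LinearMap.id : M →ₗ[R] M) - s ∘ₗ L.mkQ with hr₀
  have hmem : ∀ x : M, r₀ x ∈ L := by
    intro x
    rw [← Submodule.Quotient.mk_eq_zero]
    have : L.mkQ (r₀ x) = 0 := by
      simp only [hr₀, LinearMap.sub_apply, LinearMap.comp_apply, LinearMap.id_apply, map_sub]
      rw [← LinearMap.comp_apply L.mkQ s, hs]
      simp
    simpa using this
  set r : M →ₗ[R] L := LinearMap.codRestrict L r₀ hmem with hr
  have hrL : ∀ x : L, r (x : M) = x := by
    intro x
    apply Subtype.ext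
    have hx0 : L.mkQ (x : M) = 0 := by
      simpa [Submodule.mkQ_apply, Submodule.Quotient.mk_eq_zero] using x.2
    have hx1 : Submodule.Quotient.mk (x : M) = (0 : M ⧸ L) :=
      (Submodule.Quotient.mk_eq_zero L).mpr x.2
    simp [hr, hr₀, LinearMap.codRestrict, hx1]
  -- Step 2: `L` is a retract of `P' × F`.
  set i₁ : L →ₗ[R] w.P' × w.F := w.ι ∘ₗ L.subtype with hi₁
  set r₁ : w.P' × w.F →ₗ[R] L := r ∘ₗ w.π with hr₁
  have hsplit : ∀ x : L, r₁ (i₁ x) = x := by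
    intro x
    have : w.π (w.ι (x : M)) = (x : M) := LinearMap.congr_fun w.split (x : M)
    simp [hr₁, hi₁, this, hrL]
  -- Step 3: `L` is a retract of `(P' →₀ R) × F`.
  obtain ⟨sec, hsec⟩ := w.projP.out
  set Φ : L →ₗ[R] (w.P' →₀ R) × w.F :=
    (LinearMap.prodMap sec (LinearMap.id : w.F →ₗ[R] w.F)) ∘ₗ i₁ with hΦ
  set Ψ : (w.P' →₀ R) × w.F →ₗ[R] L :=
    r₁ ∘ₗ LinearMap.prodMap (Finsupp.linearCombination R _root_.id)
      (LinearMap.id : w.F →ₗ[R] w.F) with hΨ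
  have hΨΦ : ∀ x : L, Ψ (Φ x) = x := by
    intro x
    have h1 : Finsupp.linearCombination R _root_.id (sec (i₁ x).1) = (i₁ x).1 := hsec _
    simp only [hΦ, hΨ, LinearMap.comp_apply, LinearMap.prodMap_apply, LinearMap.id_apply, h1]
    exact hsplit x
  -- Step 4: the first coordinates of `Φ` land in a finitely supported piece.
  haveI : Module.Finite R L := Module.Finite.iff_fg.mpr hLfg
  set V : Submodule R (w.P' →₀ R) :=
    LinearMap.range ((LinearMap.fst R (w.P' →₀ R) w.F) ∘ₗ Φ) with hVdef
  have hV : V.FG := by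
    rw [hVdef, LinearMap.range_eq_map]
    exact Submodule.FG.map _ Module.Finite.fg_top
  obtain ⟨T, hT⟩ := hV
  set S : Finset w.P' := T.biUnion (fun g => g.support) with hS
  have hVW : V ≤ Finsupp.supported R R (↑S : Set w.P') := by
    rw [← hT, Submodule.span_le]
    intro g hg
    rw [SetLike.mem_coe, Finsupp.mem_supported]
    intro a ha
    exact Finset.coe_subset.mpr (Finset.subset_biUnion_of_mem _ hg) ha
  set W : Submodule R (w.P' →₀ R) := Finsupp.supported R R (↑S : Set w.P') with hW
  -- Step 5: `L` is a retract of `W × F`, which is finitely presented.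
  set Φ₂ : L →ₗ[R] W × w.F :=
    LinearMap.prod
      (LinearMap.codRestrict W ((LinearMap.fst R (w.P' →₀ R) w.F) ∘ₗ Φ)
        (fun x => hVW ⟨x, rfl⟩))
      ((LinearMap.snd R (w.P' →₀ R) w.F) ∘ₗ Φ) with hΦ₂
  set Ψ₂ : W × w.F →ₗ[R] L :=
    Ψ ∘ₗ LinearMap.prodMap W.subtype (LinearMap.id : w.F →ₗ[R] w.F) with hΨ₂
  have hret : Ψ₂ ∘ₗ Φ₂ = LinearMap.id := by
    apply LinearMap.ext
    intro x
    exact hΨΦ x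
  have hWfp := fp_of_linearEquiv (M := ((↑S : Set w.P') →₀ R)) (N := W)
    (Finsupp.supportedEquivFinsupp (α := w.P') (M := R) (R := R) (↑S : Set w.P')).symm inferInstance
  exact fp_of_retract (N := W × w.F) (L := L) (fp_prod (M := W) (N := w.F) hWfp w.fpF) Φ₂ Ψ₂ hret
end

section
/- Let R be a ring and suppose f : P ⊕ Q* → P₁ ⊕ Q₁* is a continuous morphism of topological R-modules, where P, P₁ are discrete projective left R-modules and Q*, Q₁* are the topological duals of discrete projective right R-modules Q, Q₁ (with the product/weak topology). Then the composition Q* → P ⊕ Q* → P₁ ⊕ Q₁* → P₁ (inclusion, f, projection) has image contained in a finitely generated submodule of P₁. -/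
/-- The topology of pointwise convergence on the dual `Q* = Hom_R(Q, R)` of a
right `R`-module `Q`, with `R` discrete. -/
def dualPointwiseTop (R : Type*) [Ring R] (Q : Type*) [AddCommGroup Q]
    [Module Rᵐᵒᵖ Q] : TopologicalSpace (Q →ₗ[Rᵐᵒᵖ] R) :=
  TopologicalSpace.induced (fun φ => (φ : Q → R))
    (@Pi.topologicalSpace Q (fun _ => R) (fun _ => ⊥))

section Aux

variable {R : Type*} [Ring R] {Q : Type*} [AddCommGroup Q] [Module Rᵐᵒᵖ Q]

/-- coordinate functional from a projective section -/
noncomputable def tateXi (σ : Q →ₗ[Rᵐᵒᵖ] (Q →₀ Rᵐᵒᵖ)) (t : Q) : Q →ₗ[Rᵐᵒᵖ] R where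
  toFun x := (σ x t).unop
  map_add' x y := by simp
  map_smul' r x := by
    simp [MulOpposite.smul_eq_mul_unop]

@[simp] lemma tateXi_apply (σ : Q →ₗ[Rᵐᵒᵖ] (Q →₀ Rᵐᵒᵖ)) (t x : Q) :
    tateXi σ t x = (σ x t).unop := rfl

end Aux

/-- Drinfeld's lemma: for a continuous morphism
`f : P ⊕ Q* → P₁ ⊕ Q₁*` of elementary Tate modules (`P`, `P₁` discrete
projective left modules, `Q*`, `Q₁*` duals of discrete projective right
modules), the composition `Q* → P ⊕ Q* → P₁ ⊕ Q₁* → P₁` has image contained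
in a finitely generated submodule of `P₁`. -/
theorem tate_component_image_fg
    (R : Type*) [Ring R]
    (P P₁ : Type*) [AddCommGroup P] [Module R P] [AddCommGroup P₁] [Module R P₁]
    (hP : Module.Projective R P) (hP₁ : Module.Projective R P₁)
    (Q Q₁ : Type*) [AddCommGroup Q] [Module Rᵐᵒᵖ Q]
    [AddCommGroup Q₁] [Module Rᵐᵒᵖ Q₁]
    (hQ : Module.Projective Rᵐᵒᵖ Q) (hQ₁ : Module.Projective Rᵐᵒᵖ Q₁)
    (f : P × (Q →ₗ[Rᵐᵒᵖ] R) →ₗ[R] P₁ × (Q₁ →ₗ[Rᵐᵒᵖ] R))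
    (hf : @Continuous _ _
      (@instTopologicalSpaceProd P (Q →ₗ[Rᵐᵒᵖ] R) ⊥ (dualPointwiseTop R Q))
      (@instTopologicalSpaceProd P₁ (Q₁ →ₗ[Rᵐᵒᵖ] R) ⊥ (dualPointwiseTop R Q₁))
      f) :
    ∃ N : Submodule R P₁, N.FG ∧ ∀ q : Q →ₗ[Rᵐᵒᵖ] R, (f (0, q)).1 ∈ N := by
  classical
  letI : TopologicalSpace R := ⊥
  letI : TopologicalSpace P := ⊥
  letI : TopologicalSpace P₁ := ⊥
  letI tQ : TopologicalSpace (Q →ₗ[Rᵐᵒᵖ] R) := dualPointwiseTop R Q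
  letI : TopologicalSpace (Q₁ →ₗ[Rᵐᵒᵖ] R) := dualPointwiseTop R Q₁
  -- the component map g
  set g : (Q →ₗ[Rᵐᵒᵖ] R) →ₗ[R] P₁ :=
    (LinearMap.fst R P₁ (Q₁ →ₗ[Rᵐᵒᵖ] R)).comp
      (f.comp (LinearMap.inr R P (Q →ₗ[Rᵐᵒᵖ] R))) with hg
  have hgapp : ∀ q, g q = (f (0, q)).1 := fun q => rfl
  -- g is continuous to the discrete topology
  have hcont : Continuous g := by
    have h1 : Continuous (fun q : Q →ₗ[Rᵐᵒᵖ] R => ((0 : P), q)) :=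
      continuous_const.prodMk continuous_id
    exact continuous_fst.comp (hf.comp h1)
  -- kernel is open, extract finite set S
  have hopen : IsOpen (g ⁻¹' {0}) :=
    hcont.isOpen_preimage {0} (by trivial)
  rw [show tQ = dualPointwiseTop R Q from rfl, dualPointwiseTop, isOpen_induced_iff] at hopen
  obtain ⟨U, hU, hUeq⟩ := hopen
  have h0U : (fun _ => (0:R)) ∈ U := by
    have : (0 : Q →ₗ[Rᵐᵒᵖ] R) ∈ g ⁻¹' {0} := by simp
    rw [← hUeq] at this
    exact this
  obtain ⟨S, u, hu, hpi⟩ := (isOpen_pi_iff.mp hU) _ h0U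
  -- vanishing on S implies g = 0
  have hvan : ∀ φ : Q →ₗ[Rᵐᵒᵖ] R, (∀ s ∈ S, φ s = 0) → g φ = 0 := by
    intro φ hφ
    have : φ ∈ (fun ψ : Q →ₗ[Rᵐᵒᵖ] R => (ψ : Q → R)) ⁻¹' U := by
      apply hpi
      intro a ha
      show φ a ∈ u a
      rw [hφ a ha]
      exact (hu a ha).2
    rw [hUeq] at this
    simpa using this
  -- projectivity: dual basis
  obtain ⟨σ, hσ⟩ := Module.projective_def.mp hQ
  set T : Finset Q := S.biUnion (fun s => (σ s).support) with hT
  refine ⟨Submodule.span R ((fun t => g (tateXi σ t)) '' ↑T),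
    Submodule.fg_span (T.finite_toSet.image _), ?_⟩
  intro φ
  rw [← hgapp]
  set φ' : Q →ₗ[Rᵐᵒᵖ] R := ∑ t ∈ T, φ t • tateXi σ t with hφ'
  have hagree : ∀ s ∈ S, φ' s = φ s := by
    intro s hs
    have hrep : φ s = ∑ t ∈ (σ s).support, φ t • (tateXi σ t) s := by
      conv_lhs => rw [← hσ s]
      rw [Finsupp.linearCombination_apply, Finsupp.sum, map_sum]
      refine Finset.sum_congr rfl fun t ht => ?_
      simp [MulOpposite.smul_eq_mul_unop]
    rw [hφ']
    simp only [LinearMap.sum_apply, LinearMap.smul_apply]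
    rw [hrep]
    refine (Finset.sum_subset (fun t ht => Finset.mem_biUnion.mpr ⟨s, hs, ht⟩) ?_).symm
    intro t _ htn
    have : σ s t = 0 := Finsupp.notMem_support_iff.mp htn
    simp [this]
  have hdiff : g (φ - φ') = 0 := hvan _ (fun s hs => by
    simp [hagree s hs])
  have : g φ = g φ' := by
    have := hdiff
    rw [map_sub, sub_eq_zero] at this
    exact this
  rw [this, hφ', map_sum]
  refine Submodule.sum_mem _ fun t ht => ?_
  rw [map_smul]
  exact Submodule.smul_mem _ _ (Submodule.subset_span ⟨t, ht, rfl⟩)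
end
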